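/- arXiv:1812.08979 — 2 statements merged into one kernel-verified Lean document; each statement's English description precedes it below -/
import Mathlib

section
/- For every α ∈ (0, ∞) there exist holomorphic functions f, g on the unit disk D belonging to the holomorphic α-Bloch space B(α) such that |f'(z)| + |g'(z)| ≥ 1/(1-|z|)^α for all z ∈ D. -/
open Complex Metric Set Filter Topology

noncomputable section

/-- The open unit disk in ℂ. -/
def unitDisk : Set ℂ := Metric.ball 0 1

/-- Wirtinger derivative f_z = (1/2)(f_x - i f_y). -/
def wZ (f : ℂ → ℂ) (z : ℂ) : ℂ :=
  (1/2) * (fderiv ℝ f z 1 - Complex.I * fderiv ℝ f z Complex.I)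

/-- Wirtinger derivative f_z̄ = (1/2)(f_x + i f_y). -/
def wZbar (f : ℂ → ℂ) (z : ℂ) : ℂ :=
  (1/2) * (fderiv ℝ f z 1 + Complex.I * fderiv ℝ f z Complex.I)

/-- f is harmonic on the disk: canonical decomposition f = h + conj g with h, g holomorphic. -/
def HarmonicDisk (f : ℂ → ℂ) : Prop :=
  ∃ h g : ℂ → ℂ, DifferentiableOn ℂ h unitDisk ∧ DifferentiableOn ℂ g unitDisk ∧
    ∀ z ∈ unitDisk, f z = h z + (starRingEnd ℂ) (g z)

/-- The weight (1-|z|²)^α (|f_z(z)| + |f_z̄(z)|). -/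
def weight (α : ℝ) (f : ℂ → ℂ) (z : ℂ) : ℝ :=
  (1 - ‖z‖ ^ 2) ^ α * (‖wZ f z‖ + ‖wZbar f z‖)

/-- The Bloch seminorm sup_{z ∈ D} weight α f z. -/
def semiNorm (α : ℝ) (f : ℂ → ℂ) : ℝ := sSup (weight α f '' unitDisk)

/-- The HB(α) norm. -/
def HBnorm (α : ℝ) (f : ℂ → ℂ) : ℝ := ‖f 0‖ + semiNorm α f

/-- Membership in the harmonic α-Bloch space HB(α). -/
def memHB (α : ℝ) (f : ℂ → ℂ) : Prop :=
  HarmonicDisk f ∧ BddAbove (weight α f '' unitDisk)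

/-- The little-oh condition: weight α f z → 0 as |z| → 1. -/
def littleOh (α : ℝ) (f : ℂ → ℂ) : Prop :=
  ∀ ε > 0, ∃ r < (1:ℝ), ∀ z ∈ unitDisk, r < ‖z‖ → weight α f z < ε

/-- Membership in the harmonic little α-Bloch space HB₀(α). -/
def memHB0 (α : ℝ) (f : ℂ → ℂ) : Prop := memHB α f ∧ littleOh α f

/-- τ_{φ,α}(z) = (1-|z|²)^α |φ'(z)| / (1-|φ(z)|²)^α. -/
def tau (α : ℝ) (φ : ℂ → ℂ) (z : ℂ) : ℝ :=
  (1 - ‖z‖ ^ 2) ^ α * ‖deriv φ z‖ / (1 - ‖φ z‖ ^ 2) ^ α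


/-! The functions are the even and odd parts `f_c(z) = ∑_{n ≡ c (2)} A^(n+2) l^(-n) z^(l^n)` of a
Hadamard gap series, with `A = l^α` and `l` large. On the annulus `l^(-(m+1)) < 1 - |z| ≤ l^(-m)`
the terms of `f_c'` with `n ≤ m + 1` sum to `O(A^(m+3))`, while those with `n ≥ m + 2` are
crushed by `|z|^(l^n) ≤ exp(-l^(n-m-1))`, so `(1 - |z|)^α |f_c'(z)| = O(A^3)`. The series of
the parity of `m` contains the term `n = m`, of modulus at least `A^(m+2)/e`, but not `n = m ± 1`;
so that term dominates the rest, and `|f_c'(z)| ≥ A^(m+1) ≥ (1 - |z|)^(-α)`. -/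

lemma pow_le_exp_pow_sub_one {x y : ℝ} (hx : 0 ≤ x) (hy : 1 ≤ y) (hxy : x ≤ Real.exp (y - 1))
    (k : ℕ) : x ^ k ≤ Real.exp (y ^ k - 1) := by
  have bernoulli := one_add_mul_le_pow (a := y - 1) (by linarith) k
  rw [add_sub_cancel] at bernoulli
  calc x ^ k ≤ Real.exp (y - 1) ^ k := pow_le_pow_left₀ hx hxy k
    _ = Real.exp (k * (y - 1)) := (Real.exp_nat_mul _ _).symm
    _ ≤ Real.exp (y ^ k - 1) := Real.exp_le_exp.mpr (by linarith)

lemma pow_le_exp_neg_mul {r : ℝ} (hr : 0 ≤ r) (n : ℕ) : r ^ n ≤ Real.exp (-(n * (1 - r))) := by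
  calc r ^ n ≤ Real.exp (-(1 - r)) ^ n :=
        pow_le_pow_left₀ hr (by linarith [Real.one_sub_le_exp_neg (1 - r)]) n
    _ = Real.exp (-(n * (1 - r))) := by rw [← Real.exp_nat_mul]; ring_nf

lemma exp_neg_one_le_pow_pred {r : ℝ} {N : ℕ} (hr : 1 - r ≤ (N : ℝ)⁻¹) :
    Real.exp (-1) ≤ r ^ (N - 1) := by
  rcases Nat.lt_or_ge N 2 with hN | hN
  · rw [Nat.sub_eq_zero_of_le (by omega), pow_zero, Real.exp_le_one_iff]
    norm_num
  have hN' : (2 : ℝ) ≤ N := by exact_mod_cast hN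
  have hNr : N * (1 - r) ≤ 1 := by
    calc N * (1 - r) ≤ N * (N : ℝ)⁻¹ := by gcongr
      _ = 1 := mul_inv_cancel₀ (by positivity)
  have hr₀ : 0 < r := by nlinarith
  have hsr : ((N - 1 : ℕ) : ℝ) * (1 - r) ≤ r := by
    rw [Nat.cast_pred (by omega)]
    linarith
  have hlog : -1 ≤ ((N - 1 : ℕ) : ℝ) * Real.log r := by
    have hlin : ((N - 1 : ℕ) : ℝ) * (1 - r⁻¹) = -(((N - 1 : ℕ) : ℝ) * (1 - r)) / r := by
      field_simp; ring
    have : -1 ≤ ((N - 1 : ℕ) : ℝ) * (1 - r⁻¹) := by rw [hlin, le_div_iff₀ hr₀]; linarith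
    exact this.trans
      (mul_le_mul_of_nonneg_left (Real.one_sub_inv_le_log_of_pos hr₀) (Nat.cast_nonneg _))
  calc Real.exp (-1) ≤ Real.exp ((N - 1 : ℕ) * Real.log r) := Real.exp_le_exp.mpr hlog
    _ = r ^ (N - 1) := by rw [← Real.log_pow, Real.exp_log (pow_pos hr₀ _)]

lemma exists_pow_inv_lt_one_sub {l : ℕ} (hl : 2 ≤ l) {r : ℝ} (hr₀ : 0 ≤ r) (hr : r < 1) :
    ∃ m : ℕ, ((l : ℝ) ^ (m + 1))⁻¹ < 1 - r ∧ 1 - r ≤ ((l : ℝ) ^ m)⁻¹ := by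
  have hl : (1 : ℝ) < l := by exact_mod_cast hl
  have hr' : 0 < 1 - r := by linarith
  obtain ⟨m, hm, hm'⟩ := exists_nat_pow_near (x := (1 - r)⁻¹)
    ((one_le_inv₀ hr').mpr (by linarith)) hl
  have hl₀ : (0 : ℝ) < l := by linarith
  exact ⟨m, (inv_lt_comm₀ (pow_pos hl₀ _) hr').mpr hm', (le_inv_comm₀ hr' (pow_pos hl₀ _)).mpr hm⟩

lemma pow_pred_le_exp_of_inv_pow_lt {l : ℕ} (hl : l ≠ 0) {r : ℝ} (hr : 0 ≤ r) {m : ℕ}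
    (hm : ((l : ℝ) ^ (m + 1))⁻¹ < 1 - r) (k : ℕ) :
    r ^ (l ^ (m + 1 + k) - 1) ≤ Real.exp (-((l : ℝ) ^ k - 1)) := by
  have hl : (1 : ℝ) ≤ l := by exact_mod_cast Nat.one_le_iff_ne_zero.mpr hl
  set P : ℝ := (l : ℝ) ^ (m + 1)
  set Q : ℝ := (l : ℝ) ^ k
  have hP : 0 < P := by positivity
  have hQ : 1 ≤ Q := one_le_pow₀ hl
  have hPr : 1 < P * (1 - r) := by simpa [hP.ne'] using mul_lt_mul_of_pos_left hm hP
  have hexp : ((l ^ (m + 1 + k) - 1 : ℕ) : ℝ) = P * Q - 1 := by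
    rw [Nat.cast_sub (Nat.one_le_pow _ _ (by exact_mod_cast hl)), pow_add]
    push_cast
    rfl
  refine (pow_le_exp_neg_mul hr _).trans (Real.exp_le_exp.mpr ?_)
  rw [hexp]
  nlinarith [mul_le_mul_of_nonneg_left hPr.le (by linarith : (0 : ℝ) ≤ Q)]

lemma inv_pow_rpow {x : ℝ} (hx : 0 ≤ x) (n : ℕ) (α : ℝ) : ((x ^ n)⁻¹) ^ α = ((x ^ α) ^ n)⁻¹ := by
  rw [Real.inv_rpow (by positivity), ← Real.rpow_pow_comm hx]

/-- The gap ratio `l` of the exponents `l^n` beats the growth rate `A` of the coefficients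
`A^(n+2)`, in the form that makes the tails of the series geometric. -/
structure GapCondition (l : ℕ) (A : ℝ) : Prop where
  two_le : 2 ≤ l
  twelve_le : 12 ≤ A
  sq_le_exp : 24 * A ^ 2 ≤ Real.exp (l - 1)

def lacunaryTerm (l : ℕ) (A : ℝ) (n : ℕ) (z : ℂ) : ℂ :=
  (A : ℂ) ^ (n + 2) / (l : ℂ) ^ n * z ^ l ^ n

def lacunaryTermDeriv (l : ℕ) (A : ℝ) (n : ℕ) (z : ℂ) : ℂ :=
  (A : ℂ) ^ (n + 2) * z ^ (l ^ n - 1)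

def lacunary (l : ℕ) (A : ℝ) (c : ℕ) (z : ℂ) : ℂ :=
  ∑' j, lacunaryTerm l A (2 * j + c) z

def lacunaryDeriv (l : ℕ) (A : ℝ) (c : ℕ) (z : ℂ) : ℂ :=
  ∑' j, lacunaryTermDeriv l A (2 * j + c) z

section Lacunary

variable {l : ℕ} {A : ℝ}

lemma GapCondition.pos (h : GapCondition l A) : 0 < A := by linarith [h.twelve_le]

lemma GapCondition.cast_pos (h : GapCondition l A) : (0 : ℝ) < l := by
  exact_mod_cast h.two_le.trans_lt' two_pos

lemma GapCondition.mul_pow_le_exp (h : GapCondition l A) {k : ℕ} (hk : 1 ≤ k) :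
    12 * A * (2 * A) ^ k ≤ Real.exp ((l : ℝ) ^ k - 1) := by
  have hl : (1 : ℝ) ≤ l := by exact_mod_cast h.two_le.trans' one_le_two
  have hA := h.twelve_le
  calc 12 * A * (2 * A) ^ k ≤ (12 * A) ^ k * (2 * A) ^ k := by
        gcongr
        exact le_self_pow₀ (by linarith) (by omega)
    _ = (24 * A ^ 2) ^ k := by rw [← mul_pow]; ring
    _ ≤ Real.exp ((l : ℝ) ^ k - 1) :=
        pow_le_exp_pow_sub_one (by positivity) hl h.sq_le_exp k

lemma hasDerivAt_lacunaryTerm (hl : l ≠ 0) (n : ℕ) (z : ℂ) :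
    HasDerivAt (lacunaryTerm l A n) (lacunaryTermDeriv l A n z) z := by
  have hl : (l : ℂ) ^ n ≠ 0 := pow_ne_zero _ (Nat.cast_ne_zero.mpr hl)
  refine ((hasDerivAt_pow (l ^ n) z).const_mul ((A : ℂ) ^ (n + 2) / (l : ℂ) ^ n)).congr_deriv ?_
  rw [lacunaryTermDeriv, Nat.cast_pow, ← mul_assoc, div_mul_cancel₀ _ hl]

lemma lacunaryTerm_zero (hl : l ≠ 0) (n : ℕ) : lacunaryTerm l A n 0 = 0 := by
  simp [lacunaryTerm, hl]

lemma norm_lacunaryTermDeriv (hA : 0 ≤ A) (n : ℕ) (z : ℂ) :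
    ‖lacunaryTermDeriv l A n z‖ = A ^ (n + 2) * ‖z‖ ^ (l ^ n - 1) := by
  rw [lacunaryTermDeriv, norm_mul, norm_pow, norm_pow, Complex.norm_real, Real.norm_of_nonneg hA]

lemma norm_lacunaryTermDeriv_le (hA : 0 ≤ A) (n : ℕ) {z : ℂ} (hz : ‖z‖ ≤ 1) :
    ‖lacunaryTermDeriv l A n z‖ ≤ A ^ (n + 2) := by
  rw [norm_lacunaryTermDeriv hA]
  exact mul_le_of_le_one_right (by positivity) (pow_le_one₀ (norm_nonneg z) hz)

lemma le_norm_lacunaryTermDeriv (hA : 0 ≤ A) (n : ℕ) {z : ℂ} (hz : 1 - ‖z‖ ≤ ((l : ℝ) ^ n)⁻¹) :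
    A ^ (n + 2) / 3 ≤ ‖lacunaryTermDeriv l A n z‖ := by
  have hexp : (1 : ℝ) / 3 ≤ Real.exp (-1) := by
    rw [Real.exp_neg, one_div]
    exact inv_anti₀ (Real.exp_pos 1) (Real.exp_one_lt_d9.le.trans (by norm_num))
  rw [norm_lacunaryTermDeriv hA, div_eq_mul_one_div]
  gcongr
  exact hexp.trans (exp_neg_one_le_pow_pred (by exact_mod_cast hz))

lemma GapCondition.pow_mul_pow_le_div_two_pow (h : GapCondition l A) {r : ℝ} (hr : 0 ≤ r)
    {m : ℕ} (hm : ((l : ℝ) ^ (m + 1))⁻¹ < 1 - r) {n i : ℕ} (hn : m + 2 + i ≤ n) :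
    A ^ (n + 2) * r ^ (l ^ n - 1) ≤ A ^ (m + 2) / 12 / 2 / 2 ^ i := by
  obtain ⟨k, rfl⟩ : ∃ k, n = m + 1 + k := ⟨n - (m + 1), by omega⟩
  have hdecay := pow_pred_le_exp_of_inv_pow_lt (by have := h.two_le; omega) hr hm k
  have hgrowth := h.mul_pow_le_exp (k := k) (by omega)
  have hA := h.pos
  calc A ^ (m + 1 + k + 2) * r ^ (l ^ (m + 1 + k) - 1)
      ≤ A ^ (m + 1 + k + 2) * Real.exp (-((l : ℝ) ^ k - 1)) :=
        mul_le_mul_of_nonneg_left hdecay (by positivity)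
    _ = A ^ (m + 2) / 12 / 2 ^ k * (12 * A * (2 * A) ^ k / Real.exp ((l : ℝ) ^ k - 1)) := by
        rw [Real.exp_neg, mul_pow, show m + 1 + k + 2 = m + 2 + 1 + k by omega, pow_add, pow_add,
          pow_one]
        field_simp
    _ ≤ A ^ (m + 2) / 12 / 2 ^ k :=
        mul_le_of_le_one_right (by positivity) ((div_le_one (Real.exp_pos _)).mpr hgrowth)
    _ ≤ A ^ (m + 2) / 12 / 2 / 2 ^ i := by
        rw [div_div (A ^ (m + 2) / 12) 2, ← pow_succ']
        gcongr
        · norm_num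
        · omega

lemma GapCondition.summable_norm_lacunaryTermDeriv (h : GapCondition l A) (c : ℕ) {z : ℂ}
    (hz : ‖z‖ < 1) : Summable fun j ↦ ‖lacunaryTermDeriv l A (2 * j + c) z‖ := by
  obtain ⟨m, hm, -⟩ := exists_pow_inv_lt_one_sub h.two_le (norm_nonneg z) hz
  rw [← summable_nat_add_iff (m + 1)]
  refine Summable.of_nonneg_of_le (fun _ ↦ norm_nonneg _) (fun j ↦ ?_)
    (hasSum_geometric_two' (A ^ (m + 2) / 12)).summable
  rw [norm_lacunaryTermDeriv h.pos.le]
  exact h.pow_mul_pow_le_div_two_pow (norm_nonneg z) hm (by omega)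

lemma GapCondition.norm_lt_one_of_inv_pow_lt (h : GapCondition l A) {z : ℂ} {m : ℕ}
    (hm : ((l : ℝ) ^ (m + 1))⁻¹ < 1 - ‖z‖) : ‖z‖ < 1 := by
  linarith [inv_pos.mpr (pow_pos h.cast_pos (m + 1))]

lemma GapCondition.norm_tsum_tail_le (h : GapCondition l A) {z : ℂ} {m k c : ℕ}
    (hm : ((l : ℝ) ^ (m + 1))⁻¹ < 1 - ‖z‖) (hk : m ≤ 2 * k + c) :
    ‖∑' i, lacunaryTermDeriv l A (2 * (i + (k + 1)) + c) z‖ ≤ A ^ (m + 2) / 12 := by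
  have hs := (summable_nat_add_iff (k + 1)).mpr
    (h.summable_norm_lacunaryTermDeriv c (h.norm_lt_one_of_inv_pow_lt hm))
  have hg := hasSum_geometric_two' (A ^ (m + 2) / 12)
  calc ‖∑' i, lacunaryTermDeriv l A (2 * (i + (k + 1)) + c) z‖
      ≤ ∑' i, ‖lacunaryTermDeriv l A (2 * (i + (k + 1)) + c) z‖ := norm_tsum_le_tsum_norm hs
    _ ≤ ∑' i : ℕ, A ^ (m + 2) / 12 / 2 / 2 ^ i := by
        refine hs.tsum_le_tsum (fun i ↦ ?_) hg.summable
        rw [norm_lacunaryTermDeriv h.pos.le]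
        exact h.pow_mul_pow_le_div_two_pow (norm_nonneg z) hm (by omega)
    _ = A ^ (m + 2) / 12 := hg.tsum_eq

lemma norm_sum_lacunaryTermDeriv_le (hA : 1 < A) (c k : ℕ) {z : ℂ} (hz : ‖z‖ ≤ 1) :
    ‖∑ j ∈ Finset.range k, lacunaryTermDeriv l A (2 * j + c) z‖ ≤
      A ^ (2 * k + c + 2) / (A ^ 2 - 1) := by
  have hA2 : 0 < A ^ 2 - 1 := by nlinarith
  have hgeom : (∑ j ∈ Finset.range k, (A ^ 2) ^ j) ≤ (A ^ 2) ^ k / (A ^ 2 - 1) := by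
    rw [le_div_iff₀ hA2, geom_sum_mul]
    linarith
  calc ‖∑ j ∈ Finset.range k, lacunaryTermDeriv l A (2 * j + c) z‖
      ≤ ∑ j ∈ Finset.range k, A ^ (2 * j + c + 2) :=
        (norm_sum_le _ _).trans (Finset.sum_le_sum fun j _ ↦
          norm_lacunaryTermDeriv_le (by linarith) _ hz)
    _ = A ^ (c + 2) * ∑ j ∈ Finset.range k, (A ^ 2) ^ j := by
        rw [Finset.mul_sum]
        refine Finset.sum_congr rfl fun j _ ↦ ?_
        ring
    _ ≤ A ^ (c + 2) * ((A ^ 2) ^ k / (A ^ 2 - 1)) := by gcongr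
    _ = A ^ (2 * k + c + 2) / (A ^ 2 - 1) := by ring

lemma GapCondition.lacunaryDeriv_eq (h : GapCondition l A) (c k : ℕ) {z : ℂ} (hz : ‖z‖ < 1) :
    lacunaryDeriv l A c z = ∑ j ∈ Finset.range k, lacunaryTermDeriv l A (2 * j + c) z +
      lacunaryTermDeriv l A (2 * k + c) z +
      ∑' i, lacunaryTermDeriv l A (2 * (i + (k + 1)) + c) z := by
  rw [← Finset.sum_range_succ, lacunaryDeriv,
    ((h.summable_norm_lacunaryTermDeriv c hz).of_norm).sum_add_tsum_nat_add]

lemma GapCondition.norm_lacunaryDeriv_le (h : GapCondition l A) {c : ℕ} (hc : c ≤ 1) {z : ℂ}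
    {m : ℕ} (hm : ((l : ℝ) ^ (m + 1))⁻¹ < 1 - ‖z‖) : ‖lacunaryDeriv l A c z‖ ≤ 3 * A ^ (m + 3) := by
  have hz := h.norm_lt_one_of_inv_pow_lt hm
  have hA : 12 ≤ A := h.twelve_le
  set k := (m + 1 - c) / 2
  have hhead := norm_sum_lacunaryTermDeriv_le (l := l) (A := A) (by linarith) c k hz.le
  have hmain := norm_lacunaryTermDeriv_le (l := l) h.pos.le (2 * k + c) hz.le
  have htail := h.norm_tsum_tail_le hm (show m ≤ 2 * k + c by omega)
  have hpow : A ^ (2 * k + c + 2) ≤ A ^ (m + 3) := pow_le_pow_right₀ (by linarith) (by omega)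
  have hpow' : A ^ (m + 2) ≤ A ^ (m + 3) := pow_le_pow_right₀ (by linarith) (by omega)
  have hdiv : A ^ (2 * k + c + 2) / (A ^ 2 - 1) ≤ A ^ (2 * k + c + 2) :=
    div_le_self (by positivity) (by nlinarith)
  have hpos : 0 ≤ A ^ (m + 2) := by positivity
  rw [h.lacunaryDeriv_eq c k hz]
  refine norm_add₃_le.trans ?_
  linarith

lemma GapCondition.le_norm_lacunaryDeriv (h : GapCondition l A) {z : ℂ} {m k c : ℕ}
    (hmk : m = 2 * k + c) (hm : ((l : ℝ) ^ (m + 1))⁻¹ < 1 - ‖z‖)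
    (hm' : 1 - ‖z‖ ≤ ((l : ℝ) ^ m)⁻¹) : A ^ (m + 1) ≤ ‖lacunaryDeriv l A c z‖ := by
  have hz := h.norm_lt_one_of_inv_pow_lt hm
  have hA : 12 ≤ A := h.twelve_le
  have hhead := norm_sum_lacunaryTermDeriv_le (l := l) (A := A) (by linarith) c k hz.le
  have hmain := le_norm_lacunaryTermDeriv h.pos.le m hm'
  have htail := h.norm_tsum_tail_le hm hmk.le
  rw [← hmk] at hhead
  have hdiv : A ^ (m + 2) / (A ^ 2 - 1) ≤ A ^ (m + 2) / 143 :=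
    div_le_div_of_nonneg_left (by positivity) (by norm_num) (by nlinarith)
  have hgrowth : 12 * A ^ (m + 1) ≤ A ^ (m + 2) := by
    rw [pow_succ A (m + 1), mul_comm 12]
    gcongr
  rw [h.lacunaryDeriv_eq c k hz, ← hmk]
  set a := ∑ j ∈ Finset.range k, lacunaryTermDeriv l A (2 * j + c) z
  set b := lacunaryTermDeriv l A m z
  set t := ∑' i, lacunaryTermDeriv l A (2 * (i + (k + 1)) + c) z
  have htri : ‖b‖ ≤ ‖a + b + t‖ + ‖a‖ + ‖t‖ := by
    calc ‖b‖ = ‖(a + b + t) + -a + -t‖ := by ring_nf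
      _ ≤ ‖a + b + t‖ + ‖a‖ + ‖t‖ := by
          simpa only [norm_neg] using norm_add₃_le (a := a + b + t) (b := -a) (c := -t)
  have hpos : 0 < A ^ (m + 1) := by positivity
  linarith

lemma GapCondition.hasDerivAt_lacunary (h : GapCondition l A) (c : ℕ) {z : ℂ} (hz : ‖z‖ < 1) :
    HasDerivAt (lacunary l A c) (lacunaryDeriv l A c z) z := by
  have hl : l ≠ 0 := by have := h.two_le; omega
  obtain ⟨ρ, hzρ, hρ₁⟩ := exists_between hz
  have hρ₀ : 0 ≤ ρ := (norm_nonneg z).trans hzρ.le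
  have hρ : ‖(ρ : ℂ)‖ < 1 := by rwa [Complex.norm_real, Real.norm_of_nonneg hρ₀]
  refine hasDerivAt_tsum_of_isPreconnected (h.summable_norm_lacunaryTermDeriv c hρ) isOpen_ball
    (convex_ball 0 ρ).isPreconnected (fun j y _ ↦ hasDerivAt_lacunaryTerm hl _ y)
    (fun j y hy ↦ ?_) (mem_ball_self (hzρ.trans_le' (norm_nonneg z))) ?_ (mem_ball_zero_iff.mpr hzρ)
  · have hA := h.pos
    rw [norm_lacunaryTermDeriv hA.le, norm_lacunaryTermDeriv hA.le, Complex.norm_real,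
      Real.norm_of_nonneg hρ₀]
    gcongr
    exact (mem_ball_zero_iff.mp hy).le
  · simp only [lacunaryTerm_zero hl, summable_zero]

lemma GapCondition.differentiableOn_lacunary (h : GapCondition l A) (c : ℕ) :
    DifferentiableOn ℂ (lacunary l A c) unitDisk := fun _ hz ↦
  (h.hasDerivAt_lacunary c (mem_ball_zero_iff.mp hz)).differentiableAt.differentiableWithinAt

lemma GapCondition.rpow_mul_norm_deriv_lacunary_le (h : GapCondition l A) {α : ℝ} (hα : 0 ≤ α)
    (hlA : (l : ℝ) ^ α = A) {c : ℕ} (hc : c ≤ 1) {z : ℂ} (hz : z ∈ unitDisk) :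
    (1 - ‖z‖ ^ 2) ^ α * ‖deriv (lacunary l A c) z‖ ≤ 2 ^ α * (3 * A ^ 3) := by
  have hz : ‖z‖ < 1 := mem_ball_zero_iff.mp hz
  obtain ⟨m, hm, hm'⟩ := exists_pow_inv_lt_one_sub h.two_le (norm_nonneg z) hz
  have hweight : (1 - ‖z‖ ^ 2) ^ α ≤ (A ^ m)⁻¹ * 2 ^ α := by
    rw [show 1 - ‖z‖ ^ 2 = (1 - ‖z‖) * (1 + ‖z‖) by ring,
      Real.mul_rpow (by linarith) (by positivity), ← hlA, ← inv_pow_rpow (Nat.cast_nonneg l)]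
    gcongr
    linarith
  have hA := h.pos
  rw [(h.hasDerivAt_lacunary c hz).deriv]
  calc (1 - ‖z‖ ^ 2) ^ α * ‖lacunaryDeriv l A c z‖
      ≤ (A ^ m)⁻¹ * 2 ^ α * (3 * A ^ (m + 3)) := by
        gcongr
        exact h.norm_lacunaryDeriv_le hc hm
    _ = 2 ^ α * (3 * A ^ 3) := by
        rw [pow_add]
        field_simp

lemma GapCondition.one_div_rpow_le_norm_deriv_lacunary_add (h : GapCondition l A) {α : ℝ}
    (hα : 0 ≤ α) (hlA : (l : ℝ) ^ α = A) {z : ℂ} (hz : z ∈ unitDisk) :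
    1 / (1 - ‖z‖) ^ α ≤ ‖deriv (lacunary l A 0) z‖ + ‖deriv (lacunary l A 1) z‖ := by
  have hz : ‖z‖ < 1 := mem_ball_zero_iff.mp hz
  obtain ⟨m, hm, hm'⟩ := exists_pow_inv_lt_one_sub h.two_le (norm_nonneg z) hz
  have hscale : 1 / (1 - ‖z‖) ^ α ≤ A ^ (m + 1) := by
    have := Real.rpow_le_rpow (inv_nonneg.mpr (pow_nonneg h.cast_pos.le (m + 1))) hm.le hα
    rw [inv_pow_rpow h.cast_pos.le, hlA] at this
    rw [one_div, ← inv_inv (A ^ (m + 1))]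
    exact inv_anti₀ (inv_pos.mpr (pow_pos h.pos _)) this
  rw [(h.hasDerivAt_lacunary 0 hz).deriv, (h.hasDerivAt_lacunary 1 hz).deriv]
  obtain ⟨k, rfl | rfl⟩ := Nat.even_or_odd' m
  · linarith [norm_nonneg (lacunaryDeriv l A 1 z), h.le_norm_lacunaryDeriv rfl hm hm' (c := 0)]
  · linarith [norm_nonneg (lacunaryDeriv l A 0 z), h.le_norm_lacunaryDeriv rfl hm hm' (c := 1)]

end Lacunary

lemma exists_gapCondition {α : ℝ} (hα : 0 < α) : ∃ l : ℕ, GapCondition l ((l : ℝ) ^ α) := by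
  have hbig : ∀ᶠ x : ℝ in atTop, 12 ≤ x ^ α := (tendsto_rpow_atTop hα).eventually_ge_atTop 12
  have hsmall : ∀ᶠ x : ℝ in atTop, x ^ (2 * α) * Real.exp (-1 * x) < (24 * Real.exp 1)⁻¹ :=
    (tendsto_rpow_mul_exp_neg_mul_atTop_nhds_zero (2 * α) 1 one_pos).eventually
      (gt_mem_nhds (by positivity))
  obtain ⟨l, hl, hl₁, hl₂⟩ := ((eventually_ge_atTop 2).and
    (tendsto_natCast_atTop_atTop.eventually (hbig.and hsmall))).exists
  refine ⟨l, hl, hl₁, ?_⟩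
  rw [neg_one_mul, Real.exp_neg] at hl₂
  rw [← Real.rpow_natCast, ← Real.rpow_mul (Nat.cast_nonneg l), Real.exp_sub]
  field_simp at hl₂ ⊢
  push_cast
  rw [mul_comm α 2]
  linarith

/-- For every α > 0 there exist f, g in the holomorphic α-Bloch space B(α) with
|f'(z)| + |g'(z)| ≥ 1/(1-|z|)^α on the unit disk. -/
theorem exists_bloch_pair (α : ℝ) (hα : 0 < α) :
    ∃ f g : ℂ → ℂ, DifferentiableOn ℂ f unitDisk ∧ DifferentiableOn ℂ g unitDisk ∧
      (∃ M : ℝ, ∀ z ∈ unitDisk, (1 - ‖z‖ ^ 2) ^ α * ‖deriv f z‖ ≤ M) ∧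
      (∃ M : ℝ, ∀ z ∈ unitDisk, (1 - ‖z‖ ^ 2) ^ α * ‖deriv g z‖ ≤ M) ∧
      ∀ z ∈ unitDisk,
        1 / (1 - ‖z‖) ^ α ≤ ‖deriv f z‖ + ‖deriv g z‖ := by
  obtain ⟨l, h⟩ := exists_gapCondition hα
  exact ⟨lacunary l _ 0, lacunary l _ 1, h.differentiableOn_lacunary 0,
    h.differentiableOn_lacunary 1,
    ⟨_, fun z hz ↦ h.rpow_mul_norm_deriv_lacunary_le hα.le rfl zero_le_one hz⟩,
    ⟨_, fun z hz ↦ h.rpow_mul_norm_deriv_lacunary_le hα.le rfl le_rfl hz⟩,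
    fun z hz ↦ h.one_div_rpow_le_norm_deriv_lacunary_add hα.le rfl hz⟩
end
end

section
/- Let 0 < α < ∞ and let φ be a holomorphic self-map of the unit disk D. The composition operator C_φ : HB(α) → HB(α), C_φ f = f ∘ φ, is bounded if and only if sup_{z∈D} (1-|z|²)^α |φ'(z)| / (1-|φ(z)|²)^α < ∞. -/
open Complex Metric Set Filter Topology

noncomputable section

/-!
For harmonic `f = h + conj g` the Wirtinger derivatives are `h'` and `conj g'`, so the chain rule
gives the pointwise identity `weight (f ∘ φ) z = τ(z) · weight f (φ z)`.

If `τ ≤ M`, this bounds the seminorm of `f ∘ φ` by `M` times that of `f`; the remaining term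
`|f (φ 0)|` is controlled by the mean value theorem, since `|h'| + |g'|` is at most
`(1 - r²)^(-α)` times the seminorm of `f` on the disk of radius `r = |φ 0|`.

Conversely, every `w ∈ 𝔻` carries a function of uniformly bounded `HB(α)` norm whose weight at `w`
is bounded below: the identity when `|w| ≤ 1/2`, and the normalized kernel
`(1 - |w|²) (1 - w̄ z)^(-α)`, whose weight at `w` is `α |w|`, when `|w| > 1/2`. Taking `w = φ z` in
the pointwise identity bounds `τ(z)` by the norm of `C_φ`.
-/

open ComplexConjugate

lemma mem_unitDisk {z : ℂ} : z ∈ unitDisk ↔ ‖z‖ < 1 := mem_ball_zero_iff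

lemma zero_mem_unitDisk : (0 : ℂ) ∈ unitDisk := mem_ball_self one_pos

lemma one_sub_norm_sq_pos {z : ℂ} (hz : z ∈ unitDisk) : 0 < 1 - ‖z‖ ^ 2 := by
  have := mem_unitDisk.mp hz
  nlinarith [norm_nonneg z]

lemma fderiv_add_conj_apply {h g : ℂ → ℂ} {z : ℂ} (hh : DifferentiableAt ℂ h z)
    (hg : DifferentiableAt ℂ g z) (v : ℂ) :
    fderiv ℝ (fun ζ => h ζ + conj (g ζ)) z v = v * deriv h z + conj (v * deriv g z) := by
  have hG : HasFDerivAt (fun ζ => conj (g ζ))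
      (conjCLE.toContinuousLinearMap.comp ((fderiv ℂ g z).restrictScalars ℝ)) z :=
    conjCLE.toContinuousLinearMap.hasFDerivAt.comp z (hg.hasFDerivAt.restrictScalars ℝ)
  rw [((hh.hasFDerivAt.restrictScalars ℝ).fun_add hG).fderiv]
  simp

lemma weight_eq_of_eqOn_add_conj {α : ℝ} {f h g : ℂ → ℂ} {U : Set ℂ} (hU : IsOpen U)
    (hh : DifferentiableOn ℂ h U) (hg : DifferentiableOn ℂ g U)
    (hf : EqOn f (fun ζ => h ζ + conj (g ζ)) U) {z : ℂ} (hz : z ∈ U) :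
    weight α f z = (1 - ‖z‖ ^ 2) ^ α * (‖deriv h z‖ + ‖deriv g z‖) := by
  have hfd : fderiv ℝ f z = fderiv ℝ (fun ζ => h ζ + conj (g ζ)) z :=
    (hf.eventuallyEq_of_mem (hU.mem_nhds hz)).fderiv_eq
  have hh' := hh.differentiableAt (hU.mem_nhds hz)
  have hg' := hg.differentiableAt (hU.mem_nhds hz)
  have hwZ : wZ f z = deriv h z := by
    rw [wZ, hfd, fderiv_add_conj_apply hh' hg', fderiv_add_conj_apply hh' hg']
    simp only [map_mul, conj_I, map_one]
    linear_combination (-(1 / 2) * deriv h z + (1 / 2) * conj (deriv g z)) * I_sq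
  have hwZbar : wZbar f z = conj (deriv g z) := by
    rw [wZbar, hfd, fderiv_add_conj_apply hh' hg', fderiv_add_conj_apply hh' hg']
    simp only [map_mul, conj_I, map_one]
    linear_combination ((1 / 2) * deriv h z - (1 / 2) * conj (deriv g z)) * I_sq
  rw [weight, hwZ, hwZbar, norm_conj]

lemma weight_eq_of_differentiableOn {α : ℝ} {f : ℂ → ℂ} {U : Set ℂ} (hU : IsOpen U)
    (hf : DifferentiableOn ℂ f U) {z : ℂ} (hz : z ∈ U) :
    weight α f z = (1 - ‖z‖ ^ 2) ^ α * ‖deriv f z‖ := by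
  rw [weight_eq_of_eqOn_add_conj hU hf (differentiableOn_const 0) (fun ζ _ => by simp) hz]
  simp

lemma HarmonicDisk.comp {f φ : ℂ → ℂ} (hf : HarmonicDisk f) (hφd : DifferentiableOn ℂ φ unitDisk)
    (hφm : MapsTo φ unitDisk unitDisk) : HarmonicDisk (f ∘ φ) := by
  obtain ⟨h, g, hh, hg, heq⟩ := hf
  exact ⟨h ∘ φ, g ∘ φ, hh.comp hφd hφm, hg.comp hφd hφm, fun z hz => heq (φ z) (hφm hz)⟩

lemma weight_comp {α : ℝ} {f φ : ℂ → ℂ} (hf : HarmonicDisk f)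
    (hφd : DifferentiableOn ℂ φ unitDisk) (hφm : MapsTo φ unitDisk unitDisk)
    {z : ℂ} (hz : z ∈ unitDisk) :
    weight α (f ∘ φ) z = tau α φ z * weight α f (φ z) := by
  obtain ⟨h, g, hh, hg, heq⟩ := hf
  have hφz : DifferentiableAt ℂ φ z := hφd.differentiableAt (isOpen_ball.mem_nhds hz)
  have hdiff {k : ℂ → ℂ} (hk : DifferentiableOn ℂ k unitDisk) :
      DifferentiableAt ℂ k (φ z) := hk.differentiableAt (isOpen_ball.mem_nhds (hφm hz))
  rw [weight_eq_of_eqOn_add_conj (f := f ∘ φ) isOpen_ball (hh.comp hφd hφm) (hg.comp hφd hφm)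
      (fun ζ hζ => heq (φ ζ) (hφm hζ)) hz,
    weight_eq_of_eqOn_add_conj isOpen_ball hh hg heq (hφm hz),
    deriv_comp z (hdiff hh) hφz, deriv_comp z (hdiff hg) hφz, tau, norm_mul, norm_mul]
  have := (Real.rpow_pos_of_pos (one_sub_norm_sq_pos (hφm hz)) α).ne'
  field_simp

lemma weight_nonneg {α : ℝ} (f : ℂ → ℂ) {z : ℂ} (hz : z ∈ unitDisk) : 0 ≤ weight α f z :=
  mul_nonneg (Real.rpow_nonneg (one_sub_norm_sq_pos hz).le α) (by positivity)

lemma tau_nonneg {α : ℝ} {φ : ℂ → ℂ} (hφm : MapsTo φ unitDisk unitDisk) {z : ℂ}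
    (hz : z ∈ unitDisk) : 0 ≤ tau α φ z :=
  div_nonneg (mul_nonneg (Real.rpow_nonneg (one_sub_norm_sq_pos hz).le α) (norm_nonneg _))
    (Real.rpow_nonneg (one_sub_norm_sq_pos (hφm hz)).le α)

lemma weight_le_semiNorm {α : ℝ} {f : ℂ → ℂ} (hf : memHB α f) {z : ℂ} (hz : z ∈ unitDisk) :
    weight α f z ≤ semiNorm α f :=
  le_csSup hf.2 (mem_image_of_mem _ hz)

lemma semiNorm_nonneg {α : ℝ} {f : ℂ → ℂ} (hf : memHB α f) : 0 ≤ semiNorm α f :=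
  (weight_nonneg f zero_mem_unitDisk).trans (weight_le_semiNorm hf zero_mem_unitDisk)

lemma semiNorm_le_of_forall_le {α S : ℝ} {f : ℂ → ℂ} (hS : 0 ≤ S)
    (h : ∀ z ∈ unitDisk, weight α f z ≤ S) : semiNorm α f ≤ S :=
  Real.sSup_le (forall_mem_image.mpr h) hS

lemma norm_sub_le_of_memHB {α : ℝ} (hα : 0 ≤ α) {f : ℂ → ℂ} (hf : memHB α f) {w : ℂ}
    (hw : w ∈ unitDisk) :
    ‖f w - f 0‖ ≤ 2 * ‖w‖ * semiNorm α f / (1 - ‖w‖ ^ 2) ^ α := by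
  obtain ⟨h, g, hh, hg, heq⟩ := hf.1
  have hpos := Real.rpow_pos_of_pos (one_sub_norm_sq_pos hw) α
  set B := semiNorm α f / (1 - ‖w‖ ^ 2) ^ α
  have hball : closedBall (0 : ℂ) ‖w‖ ⊆ unitDisk := closedBall_subset_ball (mem_unitDisk.mp hw)
  have hderiv : ∀ x ∈ closedBall (0 : ℂ) ‖w‖, ‖deriv h x‖ + ‖deriv g x‖ ≤ B := by
    intro x hx
    have hxw : ‖x‖ ≤ ‖w‖ := mem_closedBall_zero_iff.mp hx
    rw [le_div_iff₀ hpos, mul_comm]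
    calc (1 - ‖w‖ ^ 2) ^ α * (‖deriv h x‖ + ‖deriv g x‖)
        ≤ (1 - ‖x‖ ^ 2) ^ α * (‖deriv h x‖ + ‖deriv g x‖) := by
          gcongr
          exact (one_sub_norm_sq_pos hw).le
      _ = weight α f x := (weight_eq_of_eqOn_add_conj isOpen_ball hh hg heq (hball hx)).symm
      _ ≤ semiNorm α f := weight_le_semiNorm hf (hball hx)
  have hmvt {k : ℂ → ℂ} (hk : DifferentiableOn ℂ k unitDisk)
      (hkB : ∀ x ∈ closedBall (0 : ℂ) ‖w‖, ‖deriv k x‖ ≤ B) : ‖k w - k 0‖ ≤ B * ‖w‖ := by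
    simpa using (convex_closedBall (0 : ℂ) ‖w‖).norm_image_sub_le_of_norm_deriv_le
      (fun x hx => hk.differentiableAt (isOpen_ball.mem_nhds (hball hx))) hkB
      (mem_closedBall_self (norm_nonneg w)) (mem_closedBall_zero_iff.mpr le_rfl)
  have hhw := hmvt hh fun x hx => (le_add_of_nonneg_right (norm_nonneg _)).trans (hderiv x hx)
  have hgw := hmvt hg fun x hx => (le_add_of_nonneg_left (norm_nonneg _)).trans (hderiv x hx)
  calc ‖f w - f 0‖ = ‖(h w - h 0) + conj (g w - g 0)‖ := by
        rw [heq w hw, heq 0 zero_mem_unitDisk, map_sub]; ring_nf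
    _ ≤ B * ‖w‖ + B * ‖w‖ := (norm_add_le _ _).trans (by rw [norm_conj]; exact add_le_add hhw hgw)
    _ = 2 * ‖w‖ * semiNorm α f / (1 - ‖w‖ ^ 2) ^ α := by ring

lemma memHB_of_differentiableOn {α : ℝ} {f : ℂ → ℂ} (hf : DifferentiableOn ℂ f unitDisk)
    {S : ℝ} (hS : ∀ z ∈ unitDisk, weight α f z ≤ S) : memHB α f :=
  ⟨⟨f, 0, hf, differentiableOn_const 0, fun z _ => by simp⟩, S, forall_mem_image.mpr hS⟩

lemma weight_id {α : ℝ} {z : ℂ} (hz : z ∈ unitDisk) : weight α id z = (1 - ‖z‖ ^ 2) ^ α := by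
  simp [weight_eq_of_differentiableOn isOpen_ball differentiableOn_id hz]

lemma weight_id_le_one {α : ℝ} (hα : 0 ≤ α) {z : ℂ} (hz : z ∈ unitDisk) : weight α id z ≤ 1 := by
  rw [weight_id hz]
  exact Real.rpow_le_one (one_sub_norm_sq_pos hz).le (by nlinarith [norm_nonneg z]) hα

lemma memHB_id {α : ℝ} (hα : 0 ≤ α) : memHB α id :=
  memHB_of_differentiableOn differentiableOn_id fun _ hz => weight_id_le_one hα hz

lemma HBnorm_id_le {α : ℝ} (hα : 0 ≤ α) : HBnorm α id ≤ 1 := by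
  simpa [HBnorm] using semiNorm_le_of_forall_le zero_le_one fun _ hz => weight_id_le_one hα hz

def normalizedKernel (α : ℝ) (w z : ℂ) : ℂ :=
  ((1 - ‖w‖ ^ 2 : ℝ) : ℂ) * (1 - conj w * z) ^ ((-α : ℝ) : ℂ)

lemma one_sub_norm_mul_le_norm_one_sub_conj_mul (w z : ℂ) :
    1 - ‖w‖ * ‖z‖ ≤ ‖1 - conj w * z‖ := by
  simpa using norm_sub_norm_le (1 : ℂ) (conj w * z)

lemma one_sub_norm_sq_le_two_mul_norm_one_sub_conj_mul {w z : ℂ} (hw : ‖w‖ ≤ 1) (hz : ‖z‖ ≤ 1) :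
    1 - ‖z‖ ^ 2 ≤ 2 * ‖1 - conj w * z‖ ∧ 1 - ‖w‖ ^ 2 ≤ 2 * ‖1 - conj w * z‖ := by
  have := one_sub_norm_mul_le_norm_one_sub_conj_mul w z
  constructor <;> nlinarith [norm_nonneg z, norm_nonneg w]

lemma one_sub_conj_mul_mem_slitPlane {w z : ℂ} (hw : w ∈ unitDisk) (hz : z ∈ unitDisk) :
    1 - conj w * z ∈ slitPlane := by
  rw [sub_eq_add_neg]
  apply mem_slitPlane_of_norm_lt_one
  rw [norm_neg, norm_mul, norm_conj]
  exact mul_lt_one_of_nonneg_of_lt_one_left (norm_nonneg w) (mem_unitDisk.mp hw)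
    (mem_unitDisk.mp hz).le

lemma hasDerivAt_normalizedKernel (α : ℝ) {w z : ℂ} (hw : w ∈ unitDisk) (hz : z ∈ unitDisk) :
    HasDerivAt (normalizedKernel α w) (((1 - ‖w‖ ^ 2 : ℝ) : ℂ) *
      (((-α : ℝ) : ℂ) * (1 - conj w * z) ^ ((-α - 1 : ℝ) : ℂ) * -conj w)) z := by
  have hlin : HasDerivAt (fun z => 1 - conj w * z) (-conj w) z := by
    simpa using ((hasDerivAt_id z).const_mul (conj w)).const_sub 1
  refine ((hlin.cpow_const (c := ((-α : ℝ) : ℂ))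
    (one_sub_conj_mul_mem_slitPlane hw hz)).const_mul ((1 - ‖w‖ ^ 2 : ℝ) : ℂ)).congr_deriv ?_
  push_cast
  ring

lemma differentiableOn_normalizedKernel (α : ℝ) {w : ℂ} (hw : w ∈ unitDisk) :
    DifferentiableOn ℂ (normalizedKernel α w) unitDisk := fun _ hz =>
  (hasDerivAt_normalizedKernel α hw hz).differentiableAt.differentiableWithinAt

lemma weight_normalizedKernel {α : ℝ} (hα : 0 ≤ α) {w z : ℂ} (hw : w ∈ unitDisk)
    (hz : z ∈ unitDisk) :
    weight α (normalizedKernel α w) z = α * ‖w‖ * ((1 - ‖z‖ ^ 2) / ‖1 - conj w * z‖) ^ α *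
      ((1 - ‖w‖ ^ 2) / ‖1 - conj w * z‖) := by
  have hA : 0 < ‖1 - conj w * z‖ := norm_pos_iff.mpr (slitPlane_ne_zero
    (one_sub_conj_mul_mem_slitPlane hw hz))
  rw [weight_eq_of_differentiableOn isOpen_ball (differentiableOn_normalizedKernel α hw) hz,
    (hasDerivAt_normalizedKernel α hw hz).deriv]
  simp only [norm_mul, norm_real, norm_neg, norm_conj, norm_cpow_real, Real.norm_eq_abs,
    abs_of_pos (one_sub_norm_sq_pos hw), abs_of_nonneg hα]
  rw [Real.div_rpow (one_sub_norm_sq_pos hz).le hA.le, Real.rpow_sub_one hA.ne',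
    Real.rpow_neg hA.le]
  have := (Real.rpow_pos_of_pos hA α).ne'
  field_simp

lemma weight_normalizedKernel_le {α : ℝ} (hα : 0 ≤ α) {w z : ℂ} (hw : w ∈ unitDisk)
    (hz : z ∈ unitDisk) : weight α (normalizedKernel α w) z ≤ 2 * α * 2 ^ α := by
  have hA : 0 < ‖1 - conj w * z‖ := norm_pos_iff.mpr (slitPlane_ne_zero
    (one_sub_conj_mul_mem_slitPlane hw hz))
  obtain ⟨hzA, hwA⟩ := one_sub_norm_sq_le_two_mul_norm_one_sub_conj_mul
    (mem_unitDisk.mp hw).le (mem_unitDisk.mp hz).le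
  rw [← div_le_iff₀ hA] at hzA hwA
  rw [weight_normalizedKernel hα hw hz]
  calc α * ‖w‖ * ((1 - ‖z‖ ^ 2) / ‖1 - conj w * z‖) ^ α * ((1 - ‖w‖ ^ 2) / ‖1 - conj w * z‖)
      ≤ α * 1 * 2 ^ α * 2 := by
        have := one_sub_norm_sq_pos hz
        have := one_sub_norm_sq_pos hw
        gcongr
        exact (mem_unitDisk.mp hw).le
    _ = 2 * α * 2 ^ α := by ring

lemma weight_normalizedKernel_self {α : ℝ} (hα : 0 ≤ α) {w : ℂ} (hw : w ∈ unitDisk) :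
    weight α (normalizedKernel α w) w = α * ‖w‖ := by
  have hself : ‖1 - conj w * w‖ = 1 - ‖w‖ ^ 2 := by
    rw [conj_mul', ← ofReal_pow, ← ofReal_one, ← ofReal_sub, norm_real, Real.norm_eq_abs,
      abs_of_pos (one_sub_norm_sq_pos hw)]
  rw [weight_normalizedKernel hα hw hw, hself, div_self (one_sub_norm_sq_pos hw).ne']
  simp

lemma memHB_normalizedKernel {α : ℝ} (hα : 0 ≤ α) {w : ℂ} (hw : w ∈ unitDisk) :
    memHB α (normalizedKernel α w) :=
  memHB_of_differentiableOn (differentiableOn_normalizedKernel α hw) fun _ hz =>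
    weight_normalizedKernel_le hα hw hz

lemma HBnorm_normalizedKernel_le {α : ℝ} (hα : 0 ≤ α) {w : ℂ} (hw : w ∈ unitDisk) :
    HBnorm α (normalizedKernel α w) ≤ 1 + 2 * α * 2 ^ α := by
  have h0 : ‖normalizedKernel α w 0‖ ≤ 1 := by
    rw [show normalizedKernel α w 0 = ((1 - ‖w‖ ^ 2 : ℝ) : ℂ) by simp [normalizedKernel],
      norm_real, Real.norm_of_nonneg (one_sub_norm_sq_pos hw).le]
    exact sub_le_self 1 (sq_nonneg _)
  have hsemi := semiNorm_le_of_forall_le (by positivity) fun _ hz =>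
    weight_normalizedKernel_le hα hw hz
  exact add_le_add h0 hsemi

lemma exists_memHB_HBnorm_le_weight_ge {α : ℝ} (hα : 0 < α) :
    ∃ c > 0, ∃ K, ∀ w ∈ unitDisk, ∃ f, memHB α f ∧ HBnorm α f ≤ K ∧ c ≤ weight α f w := by
  refine ⟨min ((3 / 4) ^ α) (α / 2), lt_min (by positivity) (by positivity),
    1 + 2 * α * 2 ^ α, fun w hw => ?_⟩
  by_cases hsmall : ‖w‖ ≤ 1 / 2
  · refine ⟨id, memHB_id hα.le,
      (HBnorm_id_le hα.le).trans (le_add_of_nonneg_right (by positivity)), ?_⟩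
    rw [weight_id hw]
    refine (min_le_left _ _).trans (Real.rpow_le_rpow (by norm_num) ?_ hα.le)
    nlinarith [norm_nonneg w]
  · refine ⟨normalizedKernel α w, memHB_normalizedKernel hα.le hw,
      HBnorm_normalizedKernel_le hα.le hw, ?_⟩
    rw [weight_normalizedKernel_self hα.le hw]
    refine (min_le_right _ _).trans ?_
    nlinarith

lemma exists_tau_le_of_comp_bounded {α : ℝ} (hα : 0 < α) {φ : ℂ → ℂ}
    (hφd : DifferentiableOn ℂ φ unitDisk) (hφm : MapsTo φ unitDisk unitDisk) {C : ℝ} (hC0 : 0 ≤ C)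
    (hC : ∀ f, memHB α f → memHB α (f ∘ φ) ∧ HBnorm α (f ∘ φ) ≤ C * HBnorm α f) :
    ∃ M : ℝ, ∀ z ∈ unitDisk, tau α φ z ≤ M := by
  obtain ⟨c, hc, K, hK⟩ := exists_memHB_HBnorm_le_weight_ge hα
  refine ⟨C * K / c, fun z hz => ?_⟩
  obtain ⟨f, hf, hfK, hfc⟩ := hK (φ z) (hφm hz)
  obtain ⟨hfφ, hnorm⟩ := hC f hf
  rw [le_div_iff₀ hc]
  calc tau α φ z * c ≤ tau α φ z * weight α f (φ z) :=
        mul_le_mul_of_nonneg_left hfc (tau_nonneg hφm hz)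
    _ = weight α (f ∘ φ) z := (weight_comp hf.1 hφd hφm hz).symm
    _ ≤ semiNorm α (f ∘ φ) := weight_le_semiNorm hfφ hz
    _ ≤ HBnorm α (f ∘ φ) := le_add_of_nonneg_left (norm_nonneg _)
    _ ≤ C * HBnorm α f := hnorm
    _ ≤ C * K := mul_le_mul_of_nonneg_left hfK hC0

lemma comp_bounded_of_tau_le {α : ℝ} (hα : 0 ≤ α) {φ : ℂ → ℂ}
    (hφd : DifferentiableOn ℂ φ unitDisk) (hφm : MapsTo φ unitDisk unitDisk) {M : ℝ}
    (hM : ∀ z ∈ unitDisk, tau α φ z ≤ M) :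
    ∃ C > 0, ∀ f, memHB α f → memHB α (f ∘ φ) ∧ HBnorm α (f ∘ φ) ≤ C * HBnorm α f := by
  have hM0 : 0 ≤ M := (tau_nonneg hφm zero_mem_unitDisk).trans (hM 0 zero_mem_unitDisk)
  have hφ0 := hφm zero_mem_unitDisk
  set K := 2 * ‖φ 0‖ / (1 - ‖φ 0‖ ^ 2) ^ α
  have hK : 0 ≤ K := div_nonneg (by positivity) (Real.rpow_nonneg (one_sub_norm_sq_pos hφ0).le α)
  refine ⟨max 1 (K + M), lt_max_of_lt_left one_pos, fun f hf => ?_⟩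
  have hS := semiNorm_nonneg hf
  have hweight : ∀ z ∈ unitDisk, weight α (f ∘ φ) z ≤ M * semiNorm α f := fun z hz => by
    rw [weight_comp hf.1 hφd hφm hz]
    exact mul_le_mul (hM z hz) (weight_le_semiNorm hf (hφm hz)) (weight_nonneg f (hφm hz)) hM0
  refine ⟨⟨hf.1.comp hφd hφm, _, forall_mem_image.mpr hweight⟩, ?_⟩
  have hsemi := semiNorm_le_of_forall_le (mul_nonneg hM0 hS) hweight
  have hval : ‖f (φ 0)‖ ≤ ‖f 0‖ + K * semiNorm α f :=
    calc ‖f (φ 0)‖ ≤ ‖f 0‖ + ‖f (φ 0) - f 0‖ := norm_le_norm_add_norm_sub' _ _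
      _ ≤ ‖f 0‖ + K * semiNorm α f := by
        gcongr
        exact (norm_sub_le_of_memHB hα hf hφ0).trans_eq (by ring)
  calc HBnorm α (f ∘ φ) = ‖f (φ 0)‖ + semiNorm α (f ∘ φ) := rfl
    _ ≤ 1 * ‖f 0‖ + (K + M) * semiNorm α f := by linarith
    _ ≤ max 1 (K + M) * HBnorm α f := by
      rw [HBnorm, mul_add]
      gcongr
      exacts [le_max_left _ _, le_max_right _ _]

/-- C_φ : HB(α) → HB(α) is bounded iff sup_{z∈D} (1-|z|²)^α|φ'(z)|/(1-|φ(z)|²)^α < ∞. -/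
theorem comp_bounded_HB_iff (α : ℝ) (hα : 0 < α) (φ : ℂ → ℂ)
    (hφd : DifferentiableOn ℂ φ unitDisk) (hφm : MapsTo φ unitDisk unitDisk) :
    (∃ C > 0, ∀ f, memHB α f → memHB α (f ∘ φ) ∧ HBnorm α (f ∘ φ) ≤ C * HBnorm α f) ↔
      ∃ M : ℝ, ∀ z ∈ unitDisk, tau α φ z ≤ M :=
  ⟨fun ⟨_, hC0, hC⟩ => exists_tau_le_of_comp_bounded hα hφd hφm hC0.le hC,
    fun ⟨_, hM⟩ => comp_bounded_of_tau_le hα.le hφd hφm hM⟩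
end
end
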